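/- The polynomial P_Γ is symmetric, i.e. P_Γ(z, w) = P_Γ(w, z), and Γ is invariant under the diagonal action of each β_k: setting d₀(z) = z, d₁(z) = z − 1, d_λ(z) = z − λ (the denominators of β₀, β₁, β_λ), for each k ∈ {0, 1, λ} there exists a nonzero constant c_k ∈ ℂ such that the identity d_k(z)² d_k(w)² · P_Γ(β_k(z), β_k(w)) = c_k · P_Γ(z, w) holds in ℂ(z, w) (for k = 0 one can take c₀ = λ², i.e. z²w² P_Γ(λ/z, λ/w) = λ² P_Γ(z, w)). In particular the maps (z, w) ↦ (w, z) and (z, w) ↦ (β_k(z), β_k(w)) map the curve Γ onto itself. -/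

import Mathlib

/-- The bidegree `(2,2)` polynomial `P_Γ(z, w)` defining the curve `Γ ⊂ ℙ¹×ℙ¹`. -/
noncomputable def PGamma (l t z w : ℂ) : ℂ :=
  t ^ 2 * z ^ 2 - 2 * t * z ^ 2 * w + t ^ 2 * w ^ 2 - 2 * t * z * w ^ 2 + z ^ 2 * w ^ 2
    - 2 * l * t * z - 2 * l * t * w + 2 * (2 * (l + 1) * t - t ^ 2 - l) * z * w + l ^ 2

lemma eq_zero_iff_of_mul_eq_mul {M₀ : Type*} [MulZeroClass M₀] [NoZeroDivisors M₀]
    {a b x y : M₀} (ha : a ≠ 0) (hb : b ≠ 0) (h : a * x = b * y) : y = 0 ↔ x = 0 := by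
  rw [← mul_eq_zero_iff_left hb, ← h, mul_eq_zero_iff_left ha]

namespace PGamma

variable (l t z w : ℂ)

lemma comm : PGamma l t z w = PGamma l t w z := by
  unfold PGamma; ring

lemma beta_zero (hz : z ≠ 0) (hw : w ≠ 0) :
    z ^ 2 * w ^ 2 * PGamma l t (l / z) (l / w) = l ^ 2 * PGamma l t z w := by
  unfold PGamma; field_simp; ring

lemma beta_one (hz : z ≠ 1) (hw : w ≠ 1) :
    (z - 1) ^ 2 * (w - 1) ^ 2 * PGamma l t ((z - l) / (z - 1)) ((w - l) / (w - 1)) =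
      (l - 1) ^ 2 * PGamma l t z w := by
  have hz' : z - 1 ≠ 0 := sub_ne_zero.mpr hz
  have hw' : w - 1 ≠ 0 := sub_ne_zero.mpr hw
  unfold PGamma; field_simp; ring

lemma beta_lambda (hz : z ≠ l) (hw : w ≠ l) :
    (z - l) ^ 2 * (w - l) ^ 2 * PGamma l t (l * (z - 1) / (z - l)) (l * (w - 1) / (w - l)) =
      l ^ 2 * (l - 1) ^ 2 * PGamma l t z w := by
  have hz' : z - l ≠ 0 := sub_ne_zero.mpr hz
  have hw' : w - l ≠ 0 := sub_ne_zero.mpr hw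
  unfold PGamma; field_simp; ring

end PGamma

theorem gamma_symmetries (l t : ℂ) (hl0 : l ≠ 0) (hl1 : l ≠ 1) :
    (∀ z w : ℂ, PGamma l t z w = PGamma l t w z) ∧
    (∀ z w : ℂ, z ≠ 0 → w ≠ 0 →
      z ^ 2 * w ^ 2 * PGamma l t (l / z) (l / w) = l ^ 2 * PGamma l t z w) ∧
    (∃ c : ℂ, c ≠ 0 ∧ ∀ z w : ℂ, z ≠ 1 → w ≠ 1 →
      (z - 1) ^ 2 * (w - 1) ^ 2 *
          PGamma l t ((z - l) / (z - 1)) ((w - l) / (w - 1)) = c * PGamma l t z w) ∧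
    (∃ c : ℂ, c ≠ 0 ∧ ∀ z w : ℂ, z ≠ l → w ≠ l →
      (z - l) ^ 2 * (w - l) ^ 2 *
          PGamma l t (l * (z - 1) / (z - l)) (l * (w - 1) / (w - l)) =
        c * PGamma l t z w) ∧
    (∀ z w : ℂ, z ≠ 0 → w ≠ 0 →
      (PGamma l t z w = 0 ↔ PGamma l t (l / z) (l / w) = 0)) ∧
    (∀ z w : ℂ, z ≠ 1 → w ≠ 1 →
      (PGamma l t z w = 0 ↔ PGamma l t ((z - l) / (z - 1)) ((w - l) / (w - 1)) = 0)) ∧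
    (∀ z w : ℂ, z ≠ l → w ≠ l →
      (PGamma l t z w = 0 ↔
        PGamma l t (l * (z - 1) / (z - l)) (l * (w - 1) / (w - l)) = 0)) := by
  have hc₀ : l ^ 2 ≠ 0 := pow_ne_zero 2 hl0
  have hc₁ : (l - 1) ^ 2 ≠ 0 := pow_ne_zero 2 (sub_ne_zero.mpr hl1)
  refine ⟨PGamma.comm l t, PGamma.beta_zero l t, ⟨_, hc₁, PGamma.beta_one l t⟩,
    ⟨_, mul_ne_zero hc₀ hc₁, PGamma.beta_lambda l t⟩, fun z w hz hw => ?_,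
    fun z w hz hw => ?_, fun z w hz hw => ?_⟩
  · exact eq_zero_iff_of_mul_eq_mul (by positivity) hc₀ (PGamma.beta_zero l t z w hz hw)
  · exact eq_zero_iff_of_mul_eq_mul (by simp [sub_ne_zero, hz, hw]) hc₁
      (PGamma.beta_one l t z w hz hw)
  · exact eq_zero_iff_of_mul_eq_mul (by simp [sub_ne_zero, hz, hw]) (mul_ne_zero hc₀ hc₁)
      (PGamma.beta_lambda l t z w hz hw)
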